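/- For every integer d ≥ 0, any 2d+3 points in ℝ^d can be partitioned into three pairwise disjoint sets A₁, A₂, A₃ such that the convex hulls of A₁, A₂, A₃ have a common point. -/

import Mathlib

/-!
Sarkaria's proof. Lift each point `pᵢ` to `qᵢ = (pᵢ, 1)` and tensor it with the three vectors
`e₁, e₂, -e₁ - e₂` of `ℝ²`, whose only linear relation is that they sum to zero. This gives
`2d + 3` colour classes of three points in dimension `2d + 2`, each with `0` in its convex hull.
By the colourful Carathéodory theorem one point can be chosen from each class with `0` in the
convex hull of the choice. Grouping that convex combination by the chosen colour `r`, the relation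
forces the three partial sums `∑_{i ∈ Aᵣ} λᵢ qᵢ` to coincide; comparing last coordinates, each part
carries mass `1/3`, so the three centres of mass `3 ∑_{i ∈ Aᵣ} λᵢ pᵢ` are one common point.

Colourful Carathéodory follows Bárány: take a colourful choice whose hull is nearest to `0`, with
nearest point `x ≠ 0`. The hull lies in the half-space `⟪x, ·⟫ ≥ ‖x‖²`, so `x` is a convex
combination of at most `dim` chosen points, all on the hyperplane `⟪x, ·⟫ = ‖x‖²`. Replacing the
point of an unused colour by a point `y` of that colour with `⟪x, y⟫ ≤ 0` keeps `x` in the hull, so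
`x` is still a nearest point of the new hull, which contradicts `⟪x, y⟫ ≤ 0 < ‖x‖²`.
-/

open Set Finset Module Metric
open scoped RealInnerProductSpace

section OrderedField

variable {𝕜 V ι : Type*} [Field 𝕜] [LinearOrder 𝕜] [IsStrictOrderedRing 𝕜]
  [AddCommGroup V] [Module 𝕜 V]

theorem AffineIndependent.linearIndependent_of_apply_eq {z : ι → V}
    (hz : AffineIndependent 𝕜 z) (φ : V →ₗ[𝕜] 𝕜) {a : 𝕜} (ha : a ≠ 0)
    (hφ : ∀ i, φ (z i) = a) : LinearIndependent 𝕜 z := by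
  refine linearIndependent_iff'.2 fun s w hsum => hz.eq_zero_of_sum_eq_zero ?_ hsum
  have := congrArg φ hsum
  simp only [map_sum, map_smul, hφ, smul_eq_mul, map_zero, ← Finset.sum_mul] at this
  exact (mul_eq_zero.1 this).resolve_right ha

theorem exists_apply_nonpos_of_zero_mem_convexHull {s : Set V} (h₀ : (0 : V) ∈ convexHull 𝕜 s)
    (φ : V →ₗ[𝕜] 𝕜) : ∃ y ∈ s, φ y ≤ 0 := by
  by_contra! hpos
  have : convexHull 𝕜 s ⊆ φ ⁻¹' Ioi 0 :=
    convexHull_min hpos ((convex_Ioi 0).linear_preimage φ)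
  simpa using this h₀

theorem exists_weights_of_mem_convexHull_range [Fintype ι] {g : ι → V} {x : V}
    (hx : x ∈ convexHull 𝕜 (range g)) :
    ∃ w : ι → 𝕜, (∀ i, 0 ≤ w i) ∧ ∑ i, w i = 1 ∧ ∑ i, w i • g i = x := by
  classical
  rw [convexHull_range_eq_exists_affineCombination] at hx
  obtain ⟨s, w, hw₀, hw₁, rfl⟩ := hx
  have hw₁' : ∑ i, (s : Set ι).indicator w i = 1 := by
    rwa [Finset.sum_indicator_subset _ s.subset_univ]
  refine ⟨(s : Set ι).indicator w, fun i => ?_, hw₁', ?_⟩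
  · by_cases hi : i ∈ s <;> simp [hi, hw₀]
  · rw [Finset.affineCombination_indicator_subset _ _ s.subset_univ,
      Finset.affineCombination_eq_linear_combination _ _ _ hw₁']

/-- Carathéodory with `dim` instead of `dim + 1` points, for `x` on a supporting hyperplane of `s`
that misses `0`. -/
theorem exists_finset_card_le_finrank_of_mem_convexHull [FiniteDimensional 𝕜 V] {s : Set V}
    {x : V} (hx : x ∈ convexHull 𝕜 s) (φ : V →ₗ[𝕜] 𝕜) (hφx : φ x ≠ 0)
    (hφ : ∀ y ∈ s, φ x ≤ φ y) :
    ∃ t : Finset V, ↑t ⊆ s ∧ #t ≤ finrank 𝕜 V ∧ x ∈ convexHull 𝕜 ↑t := by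
  classical
  obtain ⟨κ, _, z, w, hzs, hz, hw₀, hw₁, rfl⟩ := eq_pos_convex_span_of_mem_convexHull hx
  have hle : ∀ k ∈ Finset.univ, w k * φ (∑ i, w i • z i) ≤ w k * φ (z k) := fun k _ =>
    mul_le_mul_of_nonneg_left (hφ _ (hzs (mem_range_self k))) (hw₀ k).le
  have heq : ∑ k, w k * φ (∑ i, w i • z i) = ∑ k, w k * φ (z k) := by
    simp [← Finset.sum_mul, hw₁]
  have hlevel : ∀ k, φ (z k) = φ (∑ i, w i • z i) := fun k =>
    ((mul_right_inj' (hw₀ k).ne').1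
      ((Finset.sum_eq_sum_iff_of_le hle).1 heq k (Finset.mem_univ k))).symm
  refine ⟨univ.image z, by simpa using hzs, ?_, ?_⟩
  · exact Finset.card_image_le.trans
      (hz.linearIndependent_of_apply_eq φ hφx hlevel).fintype_card_le_finrank
  · exact mem_convexHull_of_exists_fintype w z (fun k => (hw₀ k).le) hw₁ (fun k => by simp) rfl

end OrderedField

theorem LinearEquiv.apply_mem_convexHull_range_comp_iff {𝕜 V W ι : Type*} [Semiring 𝕜]
    [PartialOrder 𝕜] [AddCommMonoid V] [Module 𝕜 V] [AddCommMonoid W] [Module 𝕜 W]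
    (e : V ≃ₗ[𝕜] W) {g : ι → V} {x : V} :
    e x ∈ convexHull 𝕜 (range (e ∘ g)) ↔ x ∈ convexHull 𝕜 (range g) := by
  rw [Set.range_comp, ← e.coe_toLinearMap, ← LinearMap.image_convexHull]
  exact e.injective.mem_set_image

theorem exists_subset_image_compl_singleton {ι α : Type*} [Fintype ι] {g : ι → α}
    {t : Finset α} (ht : ↑t ⊆ range g) (hcard : #t < Fintype.card ι) :
    ∃ j, ↑t ⊆ g '' {j}ᶜ := by
  classical
  have : Nonempty ι := Fintype.card_pos_iff.1 (by omega)
  choose! idx hidx using fun y (hy : y ∈ t) => ht hy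
  obtain ⟨j, -, hj⟩ := Finset.exists_mem_notMem_of_card_lt_card
    ((Finset.card_image_le (s := t) (f := idx)).trans_lt hcard)
  exact ⟨j, fun y hy => ⟨idx y, fun hj' => hj (Finset.mem_image.2 ⟨y, hy, hj'⟩), hidx y hy⟩⟩

section InnerProductSpace

variable {E : Type*} [NormedAddCommGroup E] [InnerProductSpace ℝ E]

theorem Convex.norm_sq_le_inner_of_isMinOn {K : Set E} (hK : Convex ℝ K) {x : E} (hx : x ∈ K)
    (hmin : IsMinOn (‖·‖) K x) {v : E} (hv : v ∈ K) : ‖x‖ ^ 2 ≤ ⟪x, v⟫ := by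
  have hinf : ‖0 - x‖ = ⨅ w : K, ‖0 - (w : E)‖ := by
    have : Nonempty K := ⟨⟨x, hx⟩⟩
    simp only [zero_sub, norm_neg]
    exact le_antisymm (le_ciInf fun w => hmin w.2)
      (ciInf_le ⟨0, by rintro _ ⟨w, rfl⟩; positivity⟩ (⟨x, hx⟩ : K))
  have := (norm_eq_iInf_iff_real_inner_le_zero hK hx).1 hinf v hv
  rw [zero_sub, inner_neg_left, inner_sub_right, real_inner_self_eq_norm_sq] at this
  linarith

theorem colorful_caratheodory_of_innerProductSpace [FiniteDimensional ℝ E] {ι κ : Type*}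
    [Fintype ι] [Finite κ] (hι : finrank ℝ E < Fintype.card ι) (f : ι → κ → E)
    (hf : ∀ i, (0 : E) ∈ convexHull ℝ (range (f i))) :
    ∃ c : ι → κ, (0 : E) ∈ convexHull ℝ (range fun i => f i (c i)) := by
  classical
  let K : (ι → κ) → Set E := fun c => convexHull ℝ (range fun i => f i (c i))
  have : Nonempty ι := Fintype.card_pos_iff.1 (by omega)
  have : Nonempty κ := by
    obtain ⟨_, r, -⟩ := convexHull_nonempty_iff.1 ⟨0, hf (Classical.arbitrary ι)⟩
    exact ⟨r⟩
  obtain ⟨c, hc⟩ := Finite.exists_min fun c : ι → κ => infDist 0 (K c)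
  obtain ⟨x, hxK, hx_norm⟩ :=
    ((finite_range fun i => f i (c i)).isCompact_convexHull (𝕜 := ℝ)).exists_infDist_eq_dist
      (range_nonempty _).convexHull (0 : E)
  rw [dist_zero_left] at hx_norm
  by_cases hx₀ : x = 0
  · exact ⟨c, hx₀ ▸ hxK⟩
  have hmin : ∀ c', x ∈ K c' → ∀ v ∈ K c', ‖x‖ ^ 2 ≤ ⟪x, v⟫ := fun c' hx' v hv =>
    (convex_convexHull ℝ _).norm_sq_le_inner_of_isMinOn hx' (isMinOn_iff.2 fun w hw =>
      hx_norm ▸ (hc c').trans ((infDist_le_dist_of_mem hw).trans_eq (dist_zero_left w))) hv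
  obtain ⟨t, hts, htcard, hxt⟩ := exists_finset_card_le_finrank_of_mem_convexHull hxK
    (innerₛₗ ℝ x) (by simpa using hx₀)
    (by rintro _ ⟨i, rfl⟩; simpa [real_inner_self_eq_norm_sq] using
      hmin c hxK _ (subset_convexHull ℝ _ (mem_range_self i)))
  obtain ⟨j, hj⟩ := exists_subset_image_compl_singleton hts (htcard.trans_lt hι)
  obtain ⟨_, ⟨r, rfl⟩, hr⟩ := exists_apply_nonpos_of_zero_mem_convexHull (hf j) (innerₛₗ ℝ x)
  rw [innerₛₗ_apply_apply] at hr
  set c' := Function.update c j r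
  have hxc' : x ∈ K c' := by
    refine convexHull_mono (hj.trans ?_) hxt
    rintro _ ⟨i, hi, rfl⟩
    exact ⟨i, by simp [c', Function.update_of_ne hi]⟩
  have hrc' : f j r ∈ K c' := subset_convexHull ℝ _ ⟨j, by simp [c']⟩
  have hx_sq : ‖x‖ ^ 2 ≤ 0 := (hmin c' hxc' _ hrc').trans hr
  exact (hx₀ (by simpa using hx_sq.antisymm (sq_nonneg ‖x‖))).elim

end InnerProductSpace

theorem colorful_caratheodory {V ι κ : Type*} [AddCommGroup V] [Module ℝ V]
    [FiniteDimensional ℝ V] [Fintype ι] [Finite κ] (hι : finrank ℝ V < Fintype.card ι)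
    (f : ι → κ → V) (hf : ∀ i, (0 : V) ∈ convexHull ℝ (range (f i))) :
    ∃ c : ι → κ, (0 : V) ∈ convexHull ℝ (range fun i => f i (c i)) := by
  let e := LinearEquiv.ofFinrankEq V (EuclideanSpace ℝ (Fin (finrank ℝ V)))
    finrank_euclideanSpace_fin.symm
  obtain ⟨c, hc⟩ := colorful_caratheodory_of_innerProductSpace (by simpa using hι)
    (fun i r => e (f i r)) fun i => by
      simpa [Function.comp_def] using e.apply_mem_convexHull_range_comp_iff.2 (hf i)
  exact ⟨c, e.apply_mem_convexHull_range_comp_iff.1 (by simpa [Function.comp_def] using hc)⟩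

section Sarkaria

variable (R : Type*) {W : Type*} [Ring R] [AddCommGroup W] [Module R W]

/-- `v ↦ v ⊗ uᵣ` for `u = (e₁, e₂, -e₁ - e₂)`, identifying `W ⊗ R²` with `W × W`. -/
def sarkariaLift : Fin 3 → W →ₗ[R] W × W :=
  ![LinearMap.inl R W W, LinearMap.inr R W W, -(LinearMap.inl R W W + LinearMap.inr R W W)]

variable {R}

theorem sum_sarkariaLift (v : W) : ∑ r, sarkariaLift R r v = 0 := by
  simp [Fin.sum_univ_three, sarkariaLift]

theorem eq_of_sum_sarkariaLift_eq_zero {w : Fin 3 → W} (h : ∑ r, sarkariaLift R r (w r) = 0)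
    (r s : Fin 3) : w r = w s := by
  obtain ⟨h₀, h₁⟩ : w 0 = w 2 ∧ w 1 = w 2 := by
    simpa [Fin.sum_univ_three, sarkariaLift, Prod.ext_iff, add_neg_eq_zero] using h
  have h₂ : ∀ r, w r = w 2 := by
    intro r
    fin_cases r <;> simp [h₀, h₁]
  exact (h₂ r).trans (h₂ s).symm

end Sarkaria

theorem zero_mem_convexHull_range_sarkariaLift {𝕜 W : Type*} [Field 𝕜] [LinearOrder 𝕜]
    [IsStrictOrderedRing 𝕜] [AddCommGroup W] [Module 𝕜 W] (v : W) :
    (0 : W × W) ∈ convexHull 𝕜 (range fun r => sarkariaLift 𝕜 r v) :=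
  mem_convexHull_of_exists_fintype (fun _ => 3⁻¹) _ (fun _ => by positivity) (by simp)
    (fun r => mem_range_self r) (by rw [← Finset.smul_sum, sum_sarkariaLift, smul_zero])

theorem exists_tverberg_partition_three {V ι : Type*} [AddCommGroup V] [Module ℝ V]
    [FiniteDimensional ℝ V] [Fintype ι] (hι : 2 * finrank ℝ V + 3 ≤ Fintype.card ι)
    (p : ι → V) : ∃ c : ι → Fin 3, ∃ x : V, ∀ r, x ∈ convexHull ℝ (p '' {i | c i = r}) := by
  classical
  set q : ι → V × ℝ := fun i => (p i, 1)
  obtain ⟨c, hc⟩ := colorful_caratheodory (f := fun i r => sarkariaLift ℝ r (q i))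
    (by simp only [finrank_prod, finrank_self]; omega)
    fun i => zero_mem_convexHull_range_sarkariaLift (q i)
  obtain ⟨w, hw₀, hw₁, hw⟩ := exists_weights_of_mem_convexHull_range hc
  set A : Fin 3 → Finset ι := fun r => {i | c i = r}
  set S : Fin 3 → V × ℝ := fun r => ∑ i ∈ A r, w i • q i
  have hS : ∀ r s, S r = S s := by
    refine eq_of_sum_sarkariaLift_eq_zero (R := ℝ) ?_
    rw [← hw, ← Finset.sum_fiberwise univ c]
    refine Finset.sum_congr rfl fun r _ => ?_
    rw [map_sum]
    refine Finset.sum_congr rfl fun i hi => ?_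
    rw [(Finset.mem_filter.1 hi).2, map_smul]
  have hmass : ∀ r, ∑ i ∈ A r, w i = 3⁻¹ := by
    have hsnd : ∀ r, (S r).2 = ∑ i ∈ A r, w i := by simp [S, q, Prod.snd_sum]
    have htotal : ∑ r, (S r).2 = 1 := by simp only [hsnd, A, Finset.sum_fiberwise, hw₁]
    simp only [Fin.sum_univ_three, hS 1 0, hS 2 0] at htotal
    intro r
    rw [← hsnd, hS r 0]
    linarith
  refine ⟨c, (3 : ℝ) • (S 0).1, fun r => ?_⟩
  have hx : (3 : ℝ) • (S 0).1 = ∑ i ∈ A r, (3 * w i) • p i := by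
    rw [hS 0 r]
    simp [S, q, Prod.fst_sum, Finset.smul_sum, mul_smul]
  rw [hx]
  refine (convex_convexHull ℝ _).sum_mem (fun i _ => mul_nonneg zero_le_three (hw₀ i)) ?_
    fun i hi => subset_convexHull ℝ _ ⟨i, by simpa [A] using hi, rfl⟩
  rw [← Finset.mul_sum, hmass r]
  norm_num

theorem tverberg_three (d : ℕ) (p : Fin (2 * d + 3) → Fin d → ℝ) :
    ∃ A₁ A₂ A₃ : Finset (Fin (2 * d + 3)),
      Disjoint A₁ A₂ ∧ Disjoint A₁ A₃ ∧ Disjoint A₂ A₃ ∧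
      A₁ ∪ A₂ ∪ A₃ = Finset.univ ∧
      ∃ x : Fin d → ℝ, x ∈ convexHull ℝ (p '' ↑A₁) ∧ x ∈ convexHull ℝ (p '' ↑A₂) ∧
        x ∈ convexHull ℝ (p '' ↑A₃) := by
  obtain ⟨c, x, hx⟩ := exists_tverberg_partition_three (by simp) p
  let A : Fin 3 → Finset (Fin (2 * d + 3)) := fun r => {i | c i = r}
  have hA : ∀ r s, r ≠ s → Disjoint (A r) (A s) := fun r s hrs =>
    Finset.disjoint_filter.2 fun i _ hr hs => hrs (hr ▸ hs)
  refine ⟨A 0, A 1, A 2, hA 0 1 (by decide), hA 0 2 (by decide), hA 1 2 (by decide), ?_, x, ?_⟩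
  · ext i
    simp only [A, Finset.mem_union, Finset.mem_filter, Finset.mem_univ, true_and, iff_true]
    generalize c i = r
    fin_cases r <;> simp
  · simpa [A] using ⟨hx 0, hx 1, hx 2⟩
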